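/- Let V be a finite nonempty set and let X,Y⊆V be nonempty subsets. If π is a uniformly random bijection from V to {1,2,...,|V|}, then the probability that min_{x∈X} π(x) = min_{y∈Y} π(y) equals the Jaccard similarity |X∩Y|/|X∪Y|. -/
import Mathlib
open Finset

-- The set of π whose argmin over S is v has the same size for all v, w ∈ S.
lemma card_argmin_swap {V : Type*} [Fintype V] [DecidableEq V] {n : ℕ}
    (S : Finset V) {v w : V} (hv : v ∈ S) (hw : w ∈ S) :
    (univ.filter fun π : V ≃ Fin n => ∀ u ∈ S, π v ≤ π u).card
    = (univ.filter fun π : V ≃ Fin n => ∀ u ∈ S, π w ≤ π u).card := by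
  classical
  have key : ∀ (a b : V), a ∈ S → b ∈ S →
      ∀ π : V ≃ Fin n, (∀ u ∈ S, π a ≤ π u) →
        ∀ u ∈ S, ((Equiv.swap a b).trans π) b ≤ ((Equiv.swap a b).trans π) u := by
    intro a b ha hb π hπ u hu
    have hmem : (Equiv.swap a b) u ∈ S := by
      rcases eq_or_ne u a with rfl | h1
      · simpa [Equiv.swap_apply_left] using hb
      rcases eq_or_ne u b with rfl | h2
      · simpa [Equiv.swap_apply_right] using ha
      · simpa [Equiv.swap_apply_of_ne_of_ne h1 h2] using hu
    simpa [Equiv.trans_apply, Equiv.swap_apply_right] using hπ _ hmem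
  apply Finset.card_bij' (fun π _ => (Equiv.swap v w).trans π)
    (fun π _ => (Equiv.swap w v).trans π)
  · intro π hπ
    simp only [mem_filter, mem_univ, true_and] at hπ ⊢
    exact key v w hv hw π hπ
  · intro π hπ
    simp only [mem_filter, mem_univ, true_and] at hπ ⊢
    exact key w v hw hv π hπ
  · intro π _
    ext u
    simp [Equiv.swap_comm v w]
  · intro π _
    ext u
    simp [Equiv.swap_comm v w]

/-- Min-hash property: for nonempty subsets `X, Y` of a finite set `V`, the probability
(over a uniformly random bijection `π : V → {1,…,|V|}`) that the minimum of `π` over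
`X` equals the minimum of `π` over `Y` is the Jaccard similarity `|X∩Y| / |X∪Y|`. -/
theorem minhash_jaccard {V : Type*} [Fintype V] [DecidableEq V]
    (X Y : Finset V) (hX : X.Nonempty) (hY : Y.Nonempty) :
    (((Finset.univ.filter fun π : V ≃ Fin (Fintype.card V) =>
        X.inf' hX (fun x => π x) = Y.inf' hY (fun y => π y)).card : ℝ)
      / (Fintype.card (V ≃ Fin (Fintype.card V)) : ℝ))
    = ((X ∩ Y).card : ℝ) / ((X ∪ Y).card : ℝ) := by
  classical
  set n := Fintype.card V with hn
  have hXS : X ⊆ X ∪ Y := subset_union_left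
  have hYS : Y ⊆ X ∪ Y := subset_union_right
  have hSne : (X ∪ Y).Nonempty := hX.mono hXS
  -- event equivalence
  have hiff : ∀ π : V ≃ Fin n,
      (X.inf' hX (fun x => π x) = Y.inf' hY (fun y => π y)) ↔
      (∃ v ∈ X ∩ Y, ∀ u ∈ X ∪ Y, π v ≤ π u) := by
    intro π
    constructor
    · intro h
      obtain ⟨x, hx, hxe⟩ := X.exists_mem_eq_inf' hX (fun x => π x)
      obtain ⟨y, hy, hye⟩ := Y.exists_mem_eq_inf' hY (fun y => π y)
      have hxy : x = y := π.injective (by rw [← hxe, ← hye, ← h])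
      refine ⟨x, mem_inter.2 ⟨hx, hxy ▸ hy⟩, ?_⟩
      intro u hu
      rcases mem_union.1 hu with hu | hu
      · rw [← hxe]; exact inf'_le _ hu
      · rw [hxy, ← hye]; exact inf'_le _ hu
    · rintro ⟨v, hv, hmin⟩
      obtain ⟨hv1, hv2⟩ := mem_inter.1 hv
      have h1 : X.inf' hX (fun x => π x) = π v :=
        le_antisymm (inf'_le _ hv1) (le_inf' _ _ fun u hu => hmin u (hXS hu))
      have h2 : Y.inf' hY (fun y => π y) = π v :=
        le_antisymm (inf'_le _ hv2) (le_inf' _ _ fun u hu => hmin u (hYS hu))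
      rw [h1, h2]
  -- disjointness of argmin events
  have hdisj : ∀ v ∈ X ∪ Y, ∀ w ∈ X ∪ Y, v ≠ w →
      Disjoint (univ.filter fun π : V ≃ Fin n => ∀ u ∈ X ∪ Y, π v ≤ π u)
        (univ.filter fun π : V ≃ Fin n => ∀ u ∈ X ∪ Y, π w ≤ π u) := by
    intro v hv w hw hvw
    rw [Finset.disjoint_left]
    intro π h1 h2
    simp only [mem_filter, mem_univ, true_and] at h1 h2
    exact hvw (π.injective (le_antisymm (h1 w hw) (h2 v hv)))
  obtain ⟨v0, hv0⟩ := id hSne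
  set c := (univ.filter fun π : V ≃ Fin n => ∀ u ∈ X ∪ Y, π v0 ≤ π u).card with hc
  have hcard : ∀ v ∈ X ∪ Y,
      (univ.filter fun π : V ≃ Fin n => ∀ u ∈ X ∪ Y, π v ≤ π u).card = c :=
    fun v hv => card_argmin_swap (X ∪ Y) hv hv0
  -- numerator
  have hnum : (univ.filter fun π : V ≃ Fin n =>
      X.inf' hX (fun x => π x) = Y.inf' hY (fun y => π y)).card = (X ∩ Y).card * c := by
    have h1 : (univ.filter fun π : V ≃ Fin n =>
        X.inf' hX (fun x => π x) = Y.inf' hY (fun y => π y))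
        = (X ∩ Y).biUnion (fun v => univ.filter fun π => ∀ u ∈ X ∪ Y, π v ≤ π u) := by
      ext π
      simp only [mem_filter, mem_univ, true_and, mem_biUnion, hiff π]
    rw [h1, card_biUnion (fun v hv w hw hvw =>
      hdisj v (inter_subset_union hv) w (inter_subset_union hw) hvw)]
    rw [sum_congr rfl (fun v hv => hcard v (inter_subset_union hv)), sum_const, smul_eq_mul]
  -- denominator
  have hden : Fintype.card (V ≃ Fin n) = (X ∪ Y).card * c := by
    have h1 : (univ : Finset (V ≃ Fin n))
        = (X ∪ Y).biUnion (fun v => univ.filter fun π => ∀ u ∈ X ∪ Y, π v ≤ π u) := by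
      ext π
      simp only [mem_univ, mem_biUnion, mem_filter, true_and, true_iff]
      obtain ⟨v, hv, hve⟩ := (X ∪ Y).exists_mem_eq_inf' hSne (fun x => π x)
      exact ⟨v, hv, fun u hu => hve ▸ inf'_le _ hu⟩
    rw [← Finset.card_univ, h1, card_biUnion hdisj,
      sum_congr rfl hcard, sum_const, smul_eq_mul]
  have hNpos : 0 < Fintype.card (V ≃ Fin n) :=
    Fintype.card_pos_iff.2 ⟨Fintype.equivFin V⟩
  have hcpos : c ≠ 0 := by
    intro h
    rw [hden, h, mul_zero] at hNpos
    exact lt_irrefl 0 hNpos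
  rw [hnum, hden]
  push_cast
  rw [mul_div_mul_right _ _ (by exact_mod_cast hcpos)]
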